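/- Let p ≥ 2 be an integer and m ∈ ℚ. Let V be a vector space over ℚ equipped with a symmetric bilinear form B, let u_1, …, u_{p-1} ∈ V satisfy B(u_i, u_j) = P_{i,j} for all i, j, and let κ ∈ V satisfy B(κ, u_i) = 0 for 1 ≤ i ≤ p-2 and B(κ, u_{p-1}) = m·p. Set ζ = (m/p)·Σ_{i=1}^{p-1} i·u_i. Then B(κ + ζ, u_j) = 0 for every j = 1, …, p-1, and B(κ + ζ, κ + ζ) = B(κ, κ) + m²·(p-1). (In particular, for m = ±1 this gives κ̄² = κ² + (p-1) for the extension κ̄ of a class κ with κ·u_{p-1} = ±p over the rational blowdown, and in general c₁(L̄)² = c₁(L)² + m²(p-1).) -/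

import Mathlib

/-- The plumbing matrix `P` of the configuration `C_p` over `ℚ`. -/
def plumbing (p : ℕ) : Matrix (Fin (p-1)) (Fin (p-1)) ℚ :=
  Matrix.of fun i j =>
    if i = j then (if (i : ℕ) = p - 2 then -((p : ℚ) + 2) else -2)
    else if (i : ℕ) + 1 = (j : ℕ) ∨ (j : ℕ) + 1 = (i : ℕ) then 1 else 0

lemma plumbing_eq (p : ℕ) (i j : Fin (p-1)) :
    plumbing p i j =
      (if i = j then (-2 : ℚ) else 0)
      + (if i = j ∧ (i : ℕ) = p - 2 then -(p : ℚ) else 0)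
      + (if (i : ℕ) + 1 = (j : ℕ) then 1 else 0)
      + (if (j : ℕ) + 1 = (i : ℕ) then 1 else 0) := by
  rcases i with ⟨i, hi⟩; rcases j with ⟨j, hj⟩
  simp only [plumbing, Matrix.of_apply, Fin.mk.injEq, Fin.val_mk]
  split_ifs <;> first | ring1 | (exfalso; omega)

lemma key_sum (p : ℕ) (hp : 2 ≤ p) (j : Fin (p-1)) :
    ∑ i : Fin (p-1), ((i : ℚ) + 1) * plumbing p i j
      = if (j : ℕ) = p - 2 then -(p : ℚ)^2 else 0 := by
  have hsum : ∑ i : Fin (p-1), ((i : ℚ) + 1) * plumbing p i j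
      = ∑ i : Fin (p-1), (((if i = j then ((i : ℚ)+1) * (-2) else 0)
        + (if i = j ∧ (i : ℕ) = p - 2 then ((i : ℚ)+1) * (-(p:ℚ)) else 0))
        + ((if (i : ℕ) + 1 = (j : ℕ) then ((i : ℚ)+1) else 0)
        + (if (j : ℕ) + 1 = (i : ℕ) then ((i : ℚ)+1) else 0))) := by
    refine Finset.sum_congr rfl fun i _ => ?_
    rw [plumbing_eq]
    split_ifs <;> ring
  rw [hsum]
  rw [Finset.sum_add_distrib, Finset.sum_add_distrib, Finset.sum_add_distrib]
  -- term 1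
  have t1 : ∑ i : Fin (p-1), (if i = j then ((i : ℚ)+1) * (-2) else 0)
      = ((j : ℚ)+1) * (-2) := by
    rw [Finset.sum_ite_eq' Finset.univ j (fun i => ((i : ℚ)+1) * (-2))]
    simp
  -- term 2
  have t2 : ∑ i : Fin (p-1), (if i = j ∧ (i : ℕ) = p - 2 then ((i : ℚ)+1) * (-(p:ℚ)) else 0)
      = if (j : ℕ) = p - 2 then ((j : ℚ)+1) * (-(p:ℚ)) else 0 := by
    by_cases hj : (j : ℕ) = p - 2
    · simp only [hj]
      have : ∀ i : Fin (p-1), (i = j ∧ (i:ℕ) = p - 2) ↔ i = j := by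
        intro i; constructor
        · exact fun h => h.1
        · intro h; exact ⟨h, by rw [h, hj]⟩
      simp only [this]
      rw [Finset.sum_ite_eq' Finset.univ j (fun i => ((i : ℚ)+1) * (-(p:ℚ)))]
      simp [hj]
    · simp only [hj, if_false]
      apply Finset.sum_eq_zero
      intro i _
      rw [if_neg]
      rintro ⟨h1, h2⟩
      exact hj (h1 ▸ h2)
  -- term 3
  have t3 : ∑ i : Fin (p-1), (if (i : ℕ) + 1 = (j : ℕ) then ((i : ℚ)+1) else 0)
      = (j : ℚ) := by
    by_cases hj0 : (j : ℕ) = 0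
    · rw [Finset.sum_eq_zero, hj0]
      · simp
      · intro i _
        rw [if_neg]; omega
    · have hjlt : (j : ℕ) - 1 < p - 1 := by omega
      have hcond : ∀ i : Fin (p-1), ((i : ℕ) + 1 = (j : ℕ)) ↔ i = ⟨(j : ℕ) - 1, hjlt⟩ := by
        intro i
        rw [Fin.ext_iff]
        simp only [Fin.val_mk]
        omega
      simp only [hcond]
      rw [Finset.sum_ite_eq' Finset.univ (⟨(j : ℕ) - 1, hjlt⟩ : Fin (p-1))
        (fun i => ((i : ℚ)+1))]
      simp only [Finset.mem_univ, if_true, Fin.val_mk]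
      have : ((j : ℕ) - 1 : ℕ) + 1 = (j : ℕ) := by omega
      rw [show (((j : ℕ) - 1 : ℕ) : ℚ) + 1 = ((((j : ℕ) - 1 : ℕ) + 1 : ℕ) : ℚ) by push_cast; ring, this]
  -- term 4
  have t4 : ∑ i : Fin (p-1), (if (j : ℕ) + 1 = (i : ℕ) then ((i : ℚ)+1) else 0)
      = if (j : ℕ) + 1 < p - 1 then (j : ℚ) + 2 else 0 := by
    by_cases hj1 : (j : ℕ) + 1 < p - 1
    · have hcond : ∀ i : Fin (p-1), ((j : ℕ) + 1 = (i : ℕ)) ↔ i = ⟨(j : ℕ) + 1, hj1⟩ := by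
        intro i
        rw [Fin.ext_iff]
        simp only [Fin.val_mk]
        omega
      simp only [hcond]
      rw [Finset.sum_ite_eq' Finset.univ (⟨(j : ℕ) + 1, hj1⟩ : Fin (p-1))
        (fun i => ((i : ℚ)+1))]
      simp only [Finset.mem_univ, if_true, Fin.val_mk, hj1]
      push_cast
      ring
    · rw [if_neg hj1, Finset.sum_eq_zero]
      intro i _
      rw [if_neg]
      have := i.isLt
      omega
  rw [t1, t2, t3, t4]
  by_cases hj : (j : ℕ) = p - 2
  · have hnot : ¬ ((j : ℕ) + 1 < p - 1) := by omega
    rw [if_pos hj, if_pos hj, if_neg hnot]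
    have hcast : (j : ℚ) = (p : ℚ) - 2 := by
      rw [hj]
      have : ((p - 2 : ℕ) : ℚ) = (p : ℚ) - 2 := by
        rw [Nat.cast_sub hp]; norm_num
      exact this
    rw [hcast]
    ring
  · have hlt : (j : ℕ) + 1 < p - 1 := by
      have := j.isLt
      omega
    rw [if_neg hj, if_neg hj, if_pos hlt]
    ring

/-- let `B` be a symmetric bilinear form on a `ℚ`-vector space `V`, let
`u_1,…,u_{p-1}` have Gram matrix `P`, and let `κ` satisfy `B(κ,u_i) = 0` for `i ≤ p-2`
and `B(κ,u_{p-1}) = m·p`. Then `ζ = (m/p)·Σ i·u_i` satisfies `B(κ+ζ, u_j) = 0` for all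
`j` and `B(κ+ζ, κ+ζ) = B(κ,κ) + m²(p-1)`. -/
theorem stmt_16 (p : ℕ) (hp : 2 ≤ p) (m : ℚ) (V : Type*) [AddCommGroup V] [Module ℚ V]
    (B : LinearMap.BilinForm ℚ V) (hsymm : ∀ v w, B v w = B w v)
    (u : Fin (p-1) → V) (hu : ∀ i j, B (u i) (u j) = plumbing p i j)
    (κ : V)
    (hκ1 : ∀ i : Fin (p-1), (i : ℕ) < p - 2 → B κ (u i) = 0)
    (hκ2 : B κ (u ⟨p - 2, by omega⟩) = m * p) :
    (∀ j, B (κ + (m / p) • ∑ i : Fin (p-1), (((i : ℕ) + 1 : ℚ)) • u i) (u j) = 0) ∧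
    B (κ + (m / p) • ∑ i : Fin (p-1), (((i : ℕ) + 1 : ℚ)) • u i)
        (κ + (m / p) • ∑ i : Fin (p-1), (((i : ℕ) + 1 : ℚ)) • u i)
      = B κ κ + m^2 * ((p : ℚ) - 1) := by
  have hp0 : (p : ℚ) ≠ 0 := by positivity
  set ζ : V := (m / p) • ∑ i : Fin (p-1), (((i : ℕ) + 1 : ℚ)) • u i with hζ
  have hκu : ∀ j : Fin (p-1), B κ (u j) = if (j : ℕ) = p - 2 then m * p else 0 := by
    intro j
    by_cases hj : (j : ℕ) = p - 2
    · rw [if_pos hj]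
      have : j = ⟨p - 2, by omega⟩ := by rw [Fin.ext_iff]; exact hj
      rw [this]; exact hκ2
    · rw [if_neg hj]
      exact hκ1 j (by have := j.isLt; omega)
  have hζu : ∀ j : Fin (p-1), B ζ (u j) = if (j : ℕ) = p - 2 then -(m * p) else 0 := by
    intro j
    rw [hζ]
    rw [map_smul, map_sum]
    simp only [LinearMap.smul_apply, LinearMap.sum_apply, smul_eq_mul]
    have : ∀ i : Fin (p-1), B ((((i : ℕ) + 1 : ℚ)) • u i) (u j)
        = ((i : ℚ) + 1) * plumbing p i j := by
      intro i
      rw [map_smul, LinearMap.smul_apply, smul_eq_mul, hu]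
    rw [Finset.sum_congr rfl fun i _ => this i, key_sum p hp j]
    by_cases hj : (j : ℕ) = p - 2
    · rw [if_pos hj, if_pos hj]
      field_simp
    · rw [if_neg hj, if_neg hj, mul_zero]
  have hpart1 : ∀ j, B (κ + ζ) (u j) = 0 := by
    intro j
    rw [map_add, LinearMap.add_apply, hκu, hζu]
    split_ifs <;> ring
  refine ⟨hpart1, ?_⟩
  have hζκζ : B (κ + ζ) ζ = 0 := by
    rw [hζ, map_smul, map_sum]
    simp only [smul_eq_mul, map_smul, LinearMap.smul_apply]
    rw [Finset.sum_eq_zero]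
    · simp
    · intro i _
      rw [hpart1 i, mul_zero]
  have hκζ : B κ ζ = m ^ 2 * ((p : ℚ) - 1) := by
    rw [hζ, map_smul, smul_eq_mul, map_sum]
    have : ∀ i : Fin (p-1), B κ ((((i : ℕ) + 1 : ℚ)) • u i)
        = ((i : ℚ) + 1) * (if (i : ℕ) = p - 2 then m * p else 0) := by
      intro i
      rw [map_smul, smul_eq_mul, hκu]
    rw [Finset.sum_congr rfl fun i _ => this i]
    have hlast : ∀ i : Fin (p-1),
        ((i : ℚ) + 1) * (if (i : ℕ) = p - 2 then m * p else 0)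
        = if i = (⟨p - 2, by omega⟩ : Fin (p-1)) then ((i : ℚ) + 1) * (m * p) else 0 := by
      intro i
      by_cases h : (i : ℕ) = p - 2
      · rw [if_pos h, if_pos (by rw [Fin.ext_iff]; exact h)]
      · rw [if_neg h, if_neg (by rw [Fin.ext_iff]; exact h), mul_zero]
    rw [Finset.sum_congr rfl fun i _ => hlast i,
      Finset.sum_ite_eq' Finset.univ (⟨p - 2, by omega⟩ : Fin (p-1))
        (fun i => ((i : ℚ) + 1) * (m * p))]
    simp only [Finset.mem_univ, if_true, Fin.val_mk]
    have : ((p - 2 : ℕ) : ℚ) = (p : ℚ) - 2 := by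
      rw [Nat.cast_sub hp]; norm_num
    rw [this]
    field_simp
    ring
  calc B (κ + ζ) (κ + ζ) = B (κ + ζ) κ + B (κ + ζ) ζ := by rw [map_add]
    _ = B κ κ + B ζ κ := by rw [hζκζ, map_add, LinearMap.add_apply]; ring
    _ = B κ κ + B κ ζ := by rw [hsymm ζ κ]
    _ = B κ κ + m ^ 2 * ((p : ℚ) - 1) := by rw [hκζ]
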